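/- Let p ≥ 1 and φ : ℤ → ℕ → ℝ with φ t j = 0 for all j > p. Assume there exists δ ∈ (0,1) such that for every t ∈ ℤ: 0 < ∑_{j=1}^{p} |φ (t+j) j| ≤ δ·|φ t 0|. Then φ has a left inverse with absolutely summable coefficients: there exists θ : ℤ → ℕ → ℝ such that ∑_{i=0}^{∞} |θ t i| < ∞ for every t, and for all t ∈ ℤ and all i ∈ ℕ, ∑_{j=0}^{min(p,i)} θ t (i−j) · φ (t−i+j) j equals 1 when i = 0 and equals 0 when i ≥ 1. -/

import Mathlib

/-!
The coefficients `θ t i` are forced: the `i`-th equation determines `θ t i` from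
`θ t (i - 1), …, θ t (i - p)`, because `φ s 0 ≠ 0` by the dominance condition. The same condition
says that this recursion writes `θ t i` as a combination of its `p` predecessors with total
absolute weight at most `δ`, so `|θ t i| ≤ |θ t 0| r ^ i` with `r = δ ^ (1 / p) < 1`.
-/

open Finset

noncomputable def lagLeftInverse (p : ℕ) (φ : ℤ → ℕ → ℝ) (t : ℤ) : ℕ → ℝ
  | 0 => (φ t 0)⁻¹
  | i + 1 => -(∑ j ∈ (Icc 1 (min p (i + 1))).attach,
      lagLeftInverse p φ t (i + 1 - j) * φ (t - ↑(i + 1) + j) j) / φ (t - ↑(i + 1)) 0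
  decreasing_by
    have := (mem_Icc.mp j.2).1
    omega

lemma lagLeftInverse_succ (p : ℕ) (φ : ℤ → ℕ → ℝ) (t : ℤ) (i : ℕ) :
    lagLeftInverse p φ t (i + 1) = -(∑ j ∈ Icc 1 (min p (i + 1)),
      lagLeftInverse p φ t (i + 1 - j) * φ (t - ↑(i + 1) + j) j) / φ (t - ↑(i + 1)) 0 := by
  rw [lagLeftInverse, sum_attach (Icc 1 (min p (i + 1)))
    (fun j => lagLeftInverse p φ t (i + 1 - j) * φ (t - ↑(i + 1) + j) j)]

lemma sum_range_succ_eq_add_sum_Icc {M : Type*} [AddCommMonoid M] (f : ℕ → M) (m : ℕ) :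
    ∑ j ∈ range (m + 1), f j = f 0 + ∑ j ∈ Icc 1 m, f j := by
  rw [Nat.range_succ_eq_Icc_zero, ← insert_Icc_add_one_left_eq_Icc (Nat.zero_le m),
    sum_insert (by simp), zero_add]

lemma abs_le_mul_pow_of_abs_le_weighted_sum {p : ℕ} {r : ℝ} (hr0 : 0 ≤ r) (hr1 : r ≤ 1)
    (a : ℕ → ℝ) (w : ℕ → ℕ → ℝ) (hw0 : ∀ k j, 0 ≤ w k j)
    (hw : ∀ k, ∑ j ∈ Icc 1 p, w k j ≤ r ^ p)
    (ha : ∀ k, |a (k + 1)| ≤ ∑ j ∈ Icc 1 (min p (k + 1)), w k j * |a (k + 1 - j)|) (i : ℕ) :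
    |a i| ≤ |a 0| * r ^ i := by
  induction i using Nat.strong_induction_on with
  | _ i ih =>
    rcases i with _ | k
    · simp
    have hterm : ∀ j ∈ Icc 1 (min p (k + 1)),
        w k j * |a (k + 1 - j)| ≤ w k j * (|a 0| * r ^ (k + 1 - p)) := by
      intro j hj
      have ⟨hj1, hjm⟩ := mem_Icc.mp hj
      refine mul_le_mul_of_nonneg_left ?_ (hw0 k j)
      calc |a (k + 1 - j)| ≤ |a 0| * r ^ (k + 1 - j) := ih _ (by omega)
        _ ≤ |a 0| * r ^ (k + 1 - p) :=
          mul_le_mul_of_nonneg_left (pow_le_pow_of_le_one hr0 hr1 (by omega)) (abs_nonneg _)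
    calc |a (k + 1)|
        ≤ ∑ j ∈ Icc 1 (min p (k + 1)), w k j * (|a 0| * r ^ (k + 1 - p)) :=
          (ha k).trans (sum_le_sum hterm)
      _ ≤ ∑ j ∈ Icc 1 p, w k j * (|a 0| * r ^ (k + 1 - p)) := by
          apply sum_le_sum_of_subset_of_nonneg (Icc_subset_Icc_right (min_le_left _ _))
          intro j _ _
          have := hw0 k j
          positivity
      _ = (∑ j ∈ Icc 1 p, w k j) * (|a 0| * r ^ (k + 1 - p)) := by rw [sum_mul]
      _ ≤ r ^ p * (|a 0| * r ^ (k + 1 - p)) := by gcongr; exact hw k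
      _ = |a 0| * r ^ (p + (k + 1 - p)) := by ring
      _ ≤ |a 0| * r ^ (k + 1) :=
          mul_le_mul_of_nonneg_left (pow_le_pow_of_le_one hr0 hr1 (by omega)) (abs_nonneg _)

lemma summable_abs_of_abs_le_mul_pow {a : ℕ → ℝ} {C r : ℝ} (hr0 : 0 ≤ r) (hr1 : r < 1)
    (ha : ∀ i, |a i| ≤ C * r ^ i) : Summable fun i => |a i| :=
  .of_nonneg_of_le (fun _ => abs_nonneg _) ha ((summable_geometric_of_lt_one hr0 hr1).mul_left C)

section LagLeftInverse

variable {p : ℕ} {φ : ℤ → ℕ → ℝ}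

lemma abs_lagLeftInverse_succ_le (hφ0 : ∀ s, φ s 0 ≠ 0) (t : ℤ) (k : ℕ) :
    |lagLeftInverse p φ t (k + 1)| ≤ ∑ j ∈ Icc 1 (min p (k + 1)),
      |φ (t - ↑(k + 1) + j) j| / |φ (t - ↑(k + 1)) 0| * |lagLeftInverse p φ t (k + 1 - j)| := by
  rw [lagLeftInverse_succ, abs_div, abs_neg, div_le_iff₀ (abs_pos.mpr (hφ0 _)), sum_mul]
  refine (abs_sum_le_sum_abs _ _).trans (le_of_eq (sum_congr rfl fun j _ => ?_))
  rw [abs_mul, div_mul_eq_mul_div, div_mul_cancel₀ _ (abs_ne_zero.mpr (hφ0 _)), mul_comm]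

lemma abs_lagLeftInverse_le {r : ℝ} (hr0 : 0 ≤ r) (hr1 : r ≤ 1)
    (hdom : ∀ s : ℤ, ∑ j ∈ Icc 1 p, |φ (s + j) j| ≤ r ^ p * |φ s 0|)
    (hφ0 : ∀ s, φ s 0 ≠ 0) (t : ℤ) (i : ℕ) :
    |lagLeftInverse p φ t i| ≤ |lagLeftInverse p φ t 0| * r ^ i := by
  refine abs_le_mul_pow_of_abs_le_weighted_sum hr0 hr1 _
    (fun k j => |φ (t - ↑(k + 1) + j) j| / |φ (t - ↑(k + 1)) 0|)
    (fun _ _ => by positivity) (fun k => ?_) (abs_lagLeftInverse_succ_le hφ0 t) i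
  rw [← sum_div, div_le_iff₀ (abs_pos.mpr (hφ0 _))]
  exact hdom _

lemma sum_lagLeftInverse_mul (hφ0 : ∀ s, φ s 0 ≠ 0) (t : ℤ) (i : ℕ) :
    ∑ j ∈ range (min p i + 1), lagLeftInverse p φ t (i - j) * φ (t - i + j) j =
      if i = 0 then 1 else 0 := by
  rcases i with _ | k
  · simp [lagLeftInverse, hφ0]
  rw [sum_range_succ_eq_add_sum_Icc, Nat.sub_zero, Nat.cast_zero, add_zero, lagLeftInverse_succ,
    if_neg k.succ_ne_zero, div_mul_cancel₀ _ (hφ0 _), neg_add_cancel]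

end LagLeftInverse

theorem stmt_4 (p : ℕ) (hp : 1 ≤ p)
    (φ : ℤ → ℕ → ℝ)
    (δ : ℝ) (hδ0 : 0 < δ) (hδ1 : δ < 1)
    (hdom : ∀ t : ℤ,
      0 < ∑ j ∈ Finset.Icc 1 p, |φ (t + j) j| ∧
      ∑ j ∈ Finset.Icc 1 p, |φ (t + j) j| ≤ δ * |φ t 0|) :
    ∃ θ : ℤ → ℕ → ℝ,
      (∀ t : ℤ, Summable fun i => |θ t i|) ∧
      (∀ (t : ℤ) (i : ℕ),
        ∑ j ∈ Finset.range (min p i + 1), θ t (i - j) * φ (t - i + j) j =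
          if i = 0 then 1 else 0) := by
  have hφ0 : ∀ s, φ s 0 ≠ 0 := fun s => by
    have := (hdom s).1.trans_le (hdom s).2
    rintro h
    simp [h] at this
  set r := δ ^ (p⁻¹ : ℝ)
  have hr0 : 0 ≤ r := Real.rpow_nonneg hδ0.le _
  have hr1 : r < 1 := Real.rpow_lt_one hδ0.le hδ1 (by positivity)
  have hrp : r ^ p = δ := Real.rpow_inv_natCast_pow hδ0.le (by omega)
  refine ⟨lagLeftInverse p φ, fun t => ?_, sum_lagLeftInverse_mul hφ0⟩
  exact summable_abs_of_abs_le_mul_pow hr0 hr1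
    (abs_lagLeftInverse_le hr0 hr1.le (fun s => hrp ▸ (hdom s).2) hφ0 t)
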